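/- Assume X_A and X_B are conditionally independent given Y, the prior is well-defined, and f is a differentiable convex function with f(1)=0 whose derivative f' is injective. If h_A* : Σ_A → Δ_Σ, h_B* : Σ_B → Δ_Σ and p* ∈ Δ_Σ with strictly positive entries satisfy MIG^f(h_A*, h_B*, p*) = MI^f(X_A;X_B), then there exists a permutation π of Σ such that for all x_A, x_B, y: h_A*(x_A)(π(y)) = Pr[Y=y|X_A=x_A], h_B*(x_B)(π(y)) = Pr[Y=y|X_B=x_B], and p*(π(y)) = Pr[Y=y]. -/

import Mathlib

/- Since `f*(f'(g)) = g f'(g) - f(g)` and `Pr[a,b] = Pr[a] Pr[b] K(a,b)`, the gap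
`MI^f - MIG^f` is the `Pr[a] Pr[b]`-weighted sum of the Bregman divergences of `f` between `K(a,b)`
and `g(a,b)`. An injective derivative makes `f` strictly convex, so the gap vanishes only if
`g = K` everywhere, i.e. the maximizer solves the agreement system. By conditional independence
the posteriors and the prior of `Y` solve it as well, and a well-defined prior identifies the two
solutions up to a permutation of `Σ`. -/

noncomputable section

variable {SA SB S : Type*}

/-- Joint probability `Pr[X_A = a, X_B = b]` induced by the joint pmf `ν` of `(X_A, X_B, Y)`. -/
def jAB [Fintype S] (ν : SA → SB → S → ℝ) (a : SA) (b : SB) : ℝ := ∑ y, ν a b y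

/-- Joint probability `Pr[X_A = a, Y = y]`. -/
def jAY [Fintype SB] (ν : SA → SB → S → ℝ) (a : SA) (y : S) : ℝ := ∑ b, ν a b y

/-- Joint probability `Pr[X_B = b, Y = y]`. -/
def jBY [Fintype SA] (ν : SA → SB → S → ℝ) (b : SB) (y : S) : ℝ := ∑ a, ν a b y

/-- Marginal probability `Pr[X_A = a]`. -/
def prA [Fintype SB] [Fintype S] (ν : SA → SB → S → ℝ) (a : SA) : ℝ := ∑ b, ∑ y, ν a b y

/-- Marginal probability `Pr[X_B = b]`. -/
def prB [Fintype SA] [Fintype S] (ν : SA → SB → S → ℝ) (b : SB) : ℝ := ∑ a, ∑ y, ν a b y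

/-- Marginal probability `Pr[Y = y]`. -/
def prY [Fintype SA] [Fintype SB] (ν : SA → SB → S → ℝ) (y : S) : ℝ := ∑ a, ∑ b, ν a b y

/-- Pointwise mutual information `K(a,b) = Pr[a,b]/(Pr[a]·Pr[b])`. -/
def K [Fintype SA] [Fintype SB] [Fintype S] (ν : SA → SB → S → ℝ) (a : SA) (b : SB) : ℝ :=
  jAB ν a b / (prA ν a * prB ν b)

/-- Conditional probability `Pr[Y = y | X_A = a]`. -/
def condA [Fintype SB] [Fintype S] (ν : SA → SB → S → ℝ) (a : SA) (y : S) : ℝ :=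
  jAY ν a y / prA ν a

/-- Conditional probability `Pr[Y = y | X_B = b]`. -/
def condB [Fintype SA] [Fintype S] (ν : SA → SB → S → ℝ) (b : SB) (y : S) : ℝ :=
  jBY ν b y / prB ν b

/-- `X_A` and `X_B` are conditionally independent given `Y`:
`Pr[a, b | y] = Pr[a | y] · Pr[b | y]` for all `a, b, y`. -/
def CondIndep [Fintype SA] [Fintype SB] (ν : SA → SB → S → ℝ) : Prop :=
  ∀ a b y, ν a b y / prY ν y = (jAY ν a y / prY ν y) * (jBY ν b y / prY ν y)

/-- `ν` is a probability mass function. -/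
def IsPMF [Fintype SA] [Fintype SB] [Fintype S] (ν : SA → SB → S → ℝ) : Prop :=
  (∀ a b y, 0 ≤ ν a b y) ∧ ∑ a, ∑ b, ∑ y, ν a b y = 1

/-- `p` is a probability vector: nonnegative entries summing to `1`. -/
def IsProbVec {T : Type*} [Fintype T] (p : T → ℝ) : Prop := (∀ t, 0 ≤ p t) ∧ ∑ t, p t = 1

/-- The convex conjugate `f*(x) = sup_t (t·x − f(t))`, as a real-valued supremum. -/
def fconj (f : ℝ → ℝ) (x : ℝ) : ℝ := sSup (Set.range fun t => t * x - f t)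

/-- `c` is a subgradient of `f` at `t`: `f(s) ≥ f(t) + c·(s − t)` for all `s`. -/
def IsSubgradientAt (f : ℝ → ℝ) (t c : ℝ) : Prop := ∀ s : ℝ, f t + c * (s - t) ≤ f s

/-- The f-mutual information `MI^f(X_A;X_B) = Σ_{a,b} Pr[a]·Pr[b]·f(K(a,b))`. -/
def MIf [Fintype SA] [Fintype SB] [Fintype S] (f : ℝ → ℝ) (ν : SA → SB → S → ℝ) : ℝ :=
  ∑ a, ∑ b, prA ν a * prB ν b * f (K ν a b)

/-- The agreement `g(a,b) = Σ_y h_A(a)(y)·h_B(b)(y)/p(y)`. -/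
def gagr [Fintype S] (hA : SA → S → ℝ) (hB : SB → S → ℝ) (p : S → ℝ) (a : SA) (b : SB) : ℝ :=
  ∑ y, hA a y * hB b y / p y

/-- Expected `f`-mutual information gain
`MIG^f(h_A,h_B,p) = Σ Pr[a,b]·f'(g(a,b)) − Σ Pr[a]·Pr[b]·f*(f'(g(a,b)))`. -/
def MIG [Fintype SA] [Fintype SB] [Fintype S] (f : ℝ → ℝ) (ν : SA → SB → S → ℝ)
    (hA : SA → S → ℝ) (hB : SB → S → ℝ) (p : S → ℝ) : ℝ :=
  ∑ a, ∑ b, jAB ν a b * deriv f (gagr hA hB p a b)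
    - ∑ a, ∑ b, prA ν a * prB ν b * fconj f (deriv f (gagr hA hB p a b))

/-- Each agent's expected payment in the multi-task common ground mechanism `MCG(f)`. -/
def Pay [Fintype SA] [Fintype SB] [Fintype S] (f : ℝ → ℝ) (ν : SA → SB → S → ℝ)
    (sA : SA → S → ℝ) (sB : SB → S → ℝ) : ℝ :=
  MIG f ν sA sB (prY ν)

/-- `({a^{x_A}}, {b^{x_B}}, r)` is a solution of the agreement system:
probability vectors, `r` strictly positive, with
`Σ_y a^{x_A}(y)·b^{x_B}(y)/r(y) = K(x_A,x_B)` for all `x_A, x_B`. -/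
def AgreementSolution [Fintype SA] [Fintype SB] [Fintype S] (ν : SA → SB → S → ℝ)
    (a : SA → S → ℝ) (b : SB → S → ℝ) (r : S → ℝ) : Prop :=
  (∀ xa, IsProbVec (a xa)) ∧ (∀ xb, IsProbVec (b xb)) ∧ IsProbVec r ∧ (∀ y, 0 < r y) ∧
    ∀ xa xb, (∑ y, a xa y * b xb y / r y) = K ν xa xb

/-- The prior is well-defined: any two solutions of the agreement system coincide
up to a permutation of `Σ`. -/
def WellDefinedPrior [Fintype SA] [Fintype SB] [Fintype S] (ν : SA → SB → S → ℝ) : Prop :=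
  ∀ (a : SA → S → ℝ) (b : SB → S → ℝ) (r : S → ℝ)
    (c : SA → S → ℝ) (d : SB → S → ℝ) (r' : S → ℝ),
    AgreementSolution ν a b r → AgreementSolution ν c d r' →
    ∃ π : Equiv.Perm S, ∀ y, r (π y) = r' y ∧ (∀ xa, a xa (π y) = c xa y)
      ∧ (∀ xb, b xb (π y) = d xb y)

/-- The prior is stable: fixing the truthful `A`-side (resp. `B`-side) of the agreement
system, the only solution for the other side is the truthful one. -/
def StablePrior [Fintype SA] [Fintype SB] [Fintype S] (ν : SA → SB → S → ℝ) : Prop :=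
  (∀ b : SB → S → ℝ, (∀ xb, IsProbVec (b xb)) →
    (∀ xa xb, (∑ y, condA ν xa y * b xb y / prY ν y) = K ν xa xb) →
    ∀ xb y, b xb y = condB ν xb y) ∧
  (∀ a : SA → S → ℝ, (∀ xa, IsProbVec (a xa)) →
    (∀ xa xb, (∑ y, a xa y * condB ν xb y / prY ν y) = K ν xa xb) →
    ∀ xa y, a xa y = condA ν xa y)

open Set Function Finset

def bregman (f : ℝ → ℝ) (s t : ℝ) : ℝ := f s - (f t + deriv f t * (s - t))

section Bregman

variable {f : ℝ → ℝ} {s t : ℝ}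

lemma ConvexOn.bregman_nonneg (hf : ConvexOn ℝ univ f) (hft : DifferentiableAt ℝ f t) :
    0 ≤ bregman f s t := by
  rw [bregman, sub_nonneg]
  rcases lt_trichotomy t s with hts | rfl | hst
  · have := hf.deriv_le_slope (mem_univ t) (mem_univ s) hts hft
    rw [slope_def_field, le_div_iff₀ (sub_pos.2 hts)] at this
    linarith
  · simp
  · have := hf.slope_le_deriv (mem_univ s) (mem_univ t) hst hft
    rw [slope_def_field, div_le_iff₀ (sub_pos.2 hst)] at this
    linarith

lemma StrictConvexOn.bregman_pos (hf : StrictConvexOn ℝ univ f) (hft : DifferentiableAt ℝ f t)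
    (hst : s ≠ t) : 0 < bregman f s t := by
  rw [bregman, sub_pos]
  rcases hst.lt_or_gt with hst | hts
  · have := hf.slope_lt_deriv (mem_univ s) (mem_univ t) hst hft
    rw [slope_def_field, div_lt_iff₀ (sub_pos.2 hst)] at this
    linarith
  · have := hf.deriv_lt_slope (mem_univ t) (mem_univ s) hts hft
    rw [slope_def_field, lt_div_iff₀ (sub_pos.2 hts)] at this
    linarith

lemma ConvexOn.strictConvexOn_of_injective_deriv (hf : ConvexOn ℝ univ f)
    (hd : Differentiable ℝ f) (hinj : Injective (deriv f)) : StrictConvexOn ℝ univ f :=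
  StrictMono.strictConvexOn_univ_of_deriv hd.continuous
    ((monotoneOn_univ.1 (hf.monotoneOn_deriv fun x _ => hd x)).strictMono_of_injective hinj)

end Bregman

section Agreement

variable {ν : SA → SB → S → ℝ}

lemma jAB_eq_mul_K [Fintype SA] [Fintype SB] [Fintype S] {a : SA} {b : SB}
    (ha : prA ν a ≠ 0) (hb : prB ν b ≠ 0) :
    jAB ν a b = prA ν a * prB ν b * K ν a b :=
  (mul_div_cancel₀ _ (mul_ne_zero ha hb)).symm

lemma MIf_sub_MIG [Fintype SA] [Fintype SB] [Fintype S] {f : ℝ → ℝ}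
    (hconj : ∀ t, fconj f (deriv f t) = t * deriv f t - f t)
    (hA : ∀ a, prA ν a ≠ 0) (hB : ∀ b, prB ν b ≠ 0)
    (hA' : SA → S → ℝ) (hB' : SB → S → ℝ) (p : S → ℝ) :
    MIf f ν - MIG f ν hA' hB' p =
      ∑ a, ∑ b, prA ν a * prB ν b * bregman f (K ν a b) (gagr hA' hB' p a b) := by
  simp only [MIf, MIG, sub_sub_eq_add_sub, ← sum_sub_distrib]
  refine sum_congr rfl fun a _ => sum_congr rfl fun b _ => ?_
  rw [hconj, jAB_eq_mul_K (hA a) (hB b), bregman]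
  ring

lemma gagr_eq_K_of_MIG_eq_MIf [Fintype SA] [Fintype SB] [Fintype S] {f : ℝ → ℝ}
    (hf : StrictConvexOn ℝ univ f) (hd : Differentiable ℝ f)
    (hconj : ∀ t, fconj f (deriv f t) = t * deriv f t - f t)
    (hA : ∀ a, 0 < prA ν a) (hB : ∀ b, 0 < prB ν b)
    {hA' : SA → S → ℝ} {hB' : SB → S → ℝ} {p : S → ℝ}
    (hmax : MIG f ν hA' hB' p = MIf f ν) (a : SA) (b : SB) : gagr hA' hB' p a b = K ν a b := by
  have hterm : ∀ a b, 0 ≤ prA ν a * prB ν b * bregman f (K ν a b) (gagr hA' hB' p a b) :=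
    fun a b => mul_nonneg (mul_pos (hA a) (hB b)).le (hf.convexOn.bregman_nonneg (hd _))
  have hgap := MIf_sub_MIG hconj (fun a => (hA a).ne') (fun b => (hB b).ne') hA' hB' p
  rw [hmax, sub_self, eq_comm, sum_eq_zero_iff_of_nonneg
    fun a _ => sum_nonneg fun b _ => hterm a b] at hgap
  have hab := (sum_eq_zero_iff_of_nonneg fun b _ => hterm a b).1 (hgap a (mem_univ a)) b
    (mem_univ b)
  by_contra hne
  exact (mul_pos (mul_pos (hA a) (hB b)) (hf.bregman_pos (hd _) (Ne.symm hne))).ne' hab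

lemma sum_jAY [Fintype SB] [Fintype S] (a : SA) : ∑ y, jAY ν a y = prA ν a :=
  sum_comm

lemma sum_jBY [Fintype SA] [Fintype S] (b : SB) : ∑ y, jBY ν b y = prB ν b :=
  sum_comm

lemma isProbVec_condA [Fintype SB] [Fintype S] (hν : ∀ a b y, 0 ≤ ν a b y) {a : SA}
    (ha : 0 < prA ν a) : IsProbVec (condA ν a) :=
  ⟨fun _ => div_nonneg (sum_nonneg fun b _ => hν a b _) ha.le,
    by simp only [condA, ← sum_div, sum_jAY, div_self ha.ne']⟩

lemma isProbVec_condB [Fintype SA] [Fintype S] (hν : ∀ a b y, 0 ≤ ν a b y) {b : SB}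
    (hb : 0 < prB ν b) : IsProbVec (condB ν b) :=
  ⟨fun _ => div_nonneg (sum_nonneg fun a _ => hν a b _) hb.le,
    by simp only [condB, ← sum_div, sum_jBY, div_self hb.ne']⟩

lemma isProbVec_prY [Fintype SA] [Fintype SB] [Fintype S] (hν : IsPMF ν) : IsProbVec (prY ν) :=
  ⟨fun y => sum_nonneg fun a _ => sum_nonneg fun b _ => hν.1 a b y, by
    simp only [prY]
    rw [sum_comm, ← hν.2]
    exact sum_congr rfl fun a _ => sum_comm⟩

lemma CondIndep.eq_jAY_mul_jBY_div [Fintype SA] [Fintype SB] (hci : CondIndep ν) {y : S}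
    (hy : prY ν y ≠ 0) (a : SA) (b : SB) : ν a b y = jAY ν a y * jBY ν b y / prY ν y := by
  have := hci a b y
  field_simp at this
  field_simp
  linarith

lemma CondIndep.sum_condA_mul_condB_div_prY [Fintype SA] [Fintype SB] [Fintype S]
    (hci : CondIndep ν) (hA : ∀ a, prA ν a ≠ 0) (hB : ∀ b, prB ν b ≠ 0)
    (hY : ∀ y, prY ν y ≠ 0) (a : SA) (b : SB) :
    ∑ y, condA ν a y * condB ν b y / prY ν y = K ν a b := by
  have hy : ∀ y, condA ν a y * condB ν b y / prY ν y = ν a b y / (prA ν a * prB ν b) := by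
    intro y
    rw [condA, condB, hci.eq_jAY_mul_jBY_div (hY y)]
    field_simp [hA a, hB b, hY y]
  rw [sum_congr rfl fun y _ => hy y, ← sum_div]
  rfl

lemma CondIndep.agreementSolution_cond [Fintype SA] [Fintype SB] [Fintype S] (hci : CondIndep ν)
    (hν : IsPMF ν) (hA : ∀ a, 0 < prA ν a) (hB : ∀ b, 0 < prB ν b)
    (hY : ∀ y, 0 < prY ν y) :
    AgreementSolution ν (condA ν) (condB ν) (prY ν) :=
  ⟨fun a => isProbVec_condA hν.1 (hA a), fun b => isProbVec_condB hν.1 (hB b),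
    isProbVec_prY hν, hY,
    hci.sum_condA_mul_condB_div_prY (fun a => (hA a).ne') (fun b => (hB b).ne')
      (fun y => (hY y).ne')⟩

end Agreement

theorem stmt_5_general [Fintype SA] [Fintype SB] [Fintype S]
    (ν : SA → SB → S → ℝ) (hν : IsPMF ν)
    (hA : ∀ a, 0 < prA ν a) (hB : ∀ b, 0 < prB ν b) (hY : ∀ y, 0 < prY ν y)
    (hci : CondIndep ν) (hwd : WellDefinedPrior ν)
    (f : ℝ → ℝ) (hconv : ConvexOn ℝ Set.univ f) (hdiff : Differentiable ℝ f)
    (hconj : ∀ t : ℝ, fconj f (deriv f t) = t * deriv f t - f t)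
    (hinj : Function.Injective (deriv f))
    (hA' : SA → S → ℝ) (hB' : SB → S → ℝ) (p : S → ℝ)
    (hhA : ∀ a, IsProbVec (hA' a)) (hhB : ∀ b, IsProbVec (hB' b))
    (hp : IsProbVec p) (hppos : ∀ y, 0 < p y)
    (hmax : MIG f ν hA' hB' p = MIf f ν) :
    ∃ π : Equiv.Perm S, ∀ (a : SA) (b : SB) (y : S),
      hA' a (π y) = condA ν a y ∧ hB' b (π y) = condB ν b y ∧ p (π y) = prY ν y := by
  have hstrict := hconv.strictConvexOn_of_injective_deriv hdiff hinj
  have hsol : AgreementSolution ν hA' hB' p :=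
    ⟨hhA, hhB, hp, hppos, gagr_eq_K_of_MIG_eq_MIf hstrict hdiff hconj hA hB hmax⟩
  obtain ⟨π, hπ⟩ := hwd hA' hB' p (condA ν) (condB ν) (prY ν) hsol
    (hci.agreementSolution_cond hν hA hB hY)
  exact ⟨π, fun a b y => ⟨(hπ y).2.1 a, (hπ y).2.2 b, (hπ y).1⟩⟩

/-- Theorem 4.3 (Maximizer → permuted ground truth): under conditional independence,
a well-defined prior, and a differentiable convex `f` with injective derivative, any
maximizer `(h_A*, h_B*, p*)` of the expected `f`-mutual information gain is a permuted
version of the Bayesian posterior predictors and the prior of `Y`. -/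
theorem stmt_5 [Fintype SA] [Fintype SB] [Fintype S] [Nonempty SA] [Nonempty SB] [Nonempty S]
    (ν : SA → SB → S → ℝ) (hν : IsPMF ν)
    (hA : ∀ a, 0 < prA ν a) (hB : ∀ b, 0 < prB ν b) (hY : ∀ y, 0 < prY ν y)
    (hci : CondIndep ν) (hwd : WellDefinedPrior ν)
    (f : ℝ → ℝ) (hconv : ConvexOn ℝ Set.univ f) (hdiff : Differentiable ℝ f) (hf1 : f 1 = 0)
    (hconj : ∀ t : ℝ, fconj f (deriv f t) = t * deriv f t - f t)
    (hinj : Function.Injective (deriv f))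
    (hA' : SA → S → ℝ) (hB' : SB → S → ℝ) (p : S → ℝ)
    (hhA : ∀ a, IsProbVec (hA' a)) (hhB : ∀ b, IsProbVec (hB' b))
    (hp : IsProbVec p) (hppos : ∀ y, 0 < p y)
    (hmax : MIG f ν hA' hB' p = MIf f ν) :
    ∃ π : Equiv.Perm S, ∀ (a : SA) (b : SB) (y : S),
      hA' a (π y) = condA ν a y ∧ hB' b (π y) = condB ν b y ∧ p (π y) = prY ν y :=
  stmt_5_general ν hν hA hB hY hci hwd f hconv hdiff hconj hinj hA' hB' p hhA hhB hp hppos hmax
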